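/- arXiv:2106.13990 — 3 statements merged into one kernel-verified Lean document; each statement's English description precedes it below -/
import Mathlib

section
/- For a univariate polynomial f ∈ ℚ[x] of degree n with n distinct complex roots, the Hermite matrix in the basis 1, x, …, x^{n-1} is the Hankel matrix whose (i,j) entry is the power sum p_{i+j} of the roots of f, and its signature equals the number of distinct real roots of f. -/
/-!
The trace part is linear algebra in the power basis of `ℚ[X]/(f)`: evaluation at the `n`
distinct roots `α` gives `n` algebra maps to `ℂ` whose Vandermonde matrix `V` is invertible and
satisfies `V · M_x = diag(x(α)) · V`, so `Tr(x) = ∑ x(α)`. In particular the Hermite matrix is the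
Hankel matrix of the power sums `p_{i+j} = ∑ Re(α^{i+j})`.

For the signature, group the roots into real ones and conjugate pairs `α, ᾱ` with `Im α > 0`:
`Re(α^{i+j}) + Re(ᾱ^{i+j}) = 2 Re α^i Re α^j - 2 Im α^i Im α^j`. Hence the Hankel form is
`∑_{α real} ℓ_α² + 2 ∑_{pairs} (Re ℓ_α)² - 2 ∑_{pairs} (Im ℓ_α)²` with `ℓ_α(x) = ∑ xᵢ αⁱ`;
these `n` real linear forms are independent by the Vandermonde determinant again, so by
Sylvester's law of inertia the signature is `#real + #pairs - #pairs`.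
-/

open Polynomial Matrix Finset QuadraticMap ComplexConjugate

theorem Finset.sum_eq_sum_of_add_apply_involution {ι M : Type*} [AddCommGroup M]
    [IsAddTorsionFree M] {s : Finset ι} {σ : ι → ι} (hσ : ∀ a ∈ s, σ a ∈ s)
    (hσσ : ∀ a ∈ s, σ (σ a) = a) {f g : ι → M} (h : ∀ a ∈ s, f a + f (σ a) = g a + g (σ a)) :
    ∑ a ∈ s, f a = ∑ a ∈ s, g a := by
  have hperm (u : ι → M) : ∑ a ∈ s, u (σ a) = ∑ a ∈ s, u a :=
    sum_nbij' σ σ hσ hσ hσσ hσσ fun _ _ => rfl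
  apply IsAddTorsionFree.nsmul_right_injective two_ne_zero
  calc 2 • ∑ a ∈ s, f a = ∑ a ∈ s, (f a + f (σ a)) := by rw [sum_add_distrib, hperm, two_nsmul]
    _ = ∑ a ∈ s, (g a + g (σ a)) := sum_congr rfl h
    _ = 2 • ∑ a ∈ s, g a := by rw [sum_add_distrib, hperm, two_nsmul]

theorem Finset.eq_zero_of_forall_mem_sum_mul_pow_eq_zero {R : Type*} [CommRing R] [IsDomain R]
    {s : Finset R} {n : ℕ} (hs : #s = n) {v : Fin n → R}
    (h : ∀ z ∈ s, ∑ i, v i * z ^ (i : ℕ) = 0) : v = 0 :=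
  let e := (s.equivFinOfCardEq hs).symm
  eq_zero_of_forall_index_sum_mul_pow_eq_zero (Subtype.val_injective.comp e.injective)
    fun a => h _ (e a).2

theorem Polynomial.nodup_roots_of_card_toFinset_eq_natDegree {R : Type*} [CommRing R] [IsDomain R]
    [DecidableEq R] {p : R[X]} (h : #p.roots.toFinset = p.natDegree) : p.roots.Nodup :=
  Multiset.toFinset_card_eq_card_iff_nodup.mp <|
    le_antisymm (Multiset.toFinset_card_le _) (h ▸ card_roots' p)

theorem Algebra.algebraMap_trace_eq_sum_of_isUnit_det {R S T ι : Type*} [CommRing R] [CommRing S]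
    [Algebra R S] [CommRing T] [Algebra R T] [Fintype ι] [DecidableEq ι] (b : Module.Basis ι R S)
    (φ : ι → S →ₐ[R] T) (hφ : IsUnit (Matrix.of fun a l => φ a (b l)).det) (x : S) :
    algebraMap R T (Algebra.trace R S x) = ∑ a, φ a x := by
  set V : Matrix ι ι T := Matrix.of fun a l => φ a (b l)
  set M := (Algebra.leftMulMatrix b x).map (algebraMap R T)
  have hVM : V * M = diagonal (fun a => φ a x) * V := by
    ext a j
    have hxb : x * b j = ∑ l, Algebra.leftMulMatrix b x l j • b l := by
      simp only [Algebra.leftMulMatrix_eq_repr_mul, Module.Basis.sum_repr]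
    calc (V * M) a j = φ a (x * b j) := by
          rw [hxb, map_sum]
          simp [V, M, Matrix.mul_apply, Algebra.smul_def, mul_comm]
      _ = (diagonal (fun a => φ a x) * V) a j := by simp [V]
  have hM : M = V⁻¹ * diagonal (fun a => φ a x) * V := by
    rw [Matrix.mul_assoc, ← hVM, ← Matrix.mul_assoc, nonsing_inv_mul _ hφ, Matrix.one_mul]
  rw [Algebra.trace_eq_matrix_trace b, AddMonoidHom.map_trace]
  change M.trace = _
  rw [hM, trace_mul_cycle, mul_nonsing_inv _ hφ, Matrix.one_mul, trace_diagonal]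

theorem AdjoinRoot.algebraMap_trace_mk_eq_sum_roots {K L : Type*} [Field K] [Field L]
    [Algebra K L] [DecidableEq L] {f : K[X]} (hf : f ≠ 0)
    (hroots : #(f.map (algebraMap K L)).roots.toFinset = f.natDegree) (g : K[X]) :
    algebraMap K L (Algebra.trace K (AdjoinRoot f) (mk f g)) =
      ∑ z ∈ (f.map (algebraMap K L)).roots.toFinset, aeval z g := by
  set s := (f.map (algebraMap K L)).roots.toFinset
  set e : Fin f.natDegree ≃ s := (s.equivFinOfCardEq hroots).symm
  have hroot (a : Fin f.natDegree) : f.eval₂ (Algebra.ofId K L : K →+* L) (e a) = 0 := by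
    have := (e a).2
    rwa [Multiset.mem_toFinset, mem_roots (map_ne_zero hf), IsRoot, eval_map,
      ← Algebra.toRingHom_ofId] at this
  let φ a := liftAlgHom f (Algebra.ofId K L) (e a) (hroot a)
  have hV : IsUnit (Matrix.of fun a l : Fin f.natDegree => φ a ((powerBasis hf).basis l)).det := by
    have : (Matrix.of fun a l : Fin f.natDegree => φ a ((powerBasis hf).basis l)) =
        vandermonde (fun a => (e a : L)) := by
      ext a l
      simp [φ]
    rw [this]
    exact (det_vandermonde_ne_zero_iff.mpr (Subtype.val_injective.comp e.injective)).isUnit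
  rw [Algebra.algebraMap_trace_eq_sum_of_isUnit_det _ φ hV, ← sum_coe_sort s, ← e.sum_comp]
  simp [φ, aeval_def, Algebra.toRingHom_ofId]

namespace Matrix

variable {ι κ R : Type*} [Fintype ι] [DecidableEq ι] [Fintype κ] [DecidableEq κ]

theorem toQuadraticForm'_transpose_mul_diagonal_mul [CommRing R] (P : Matrix κ ι R) (w : κ → R)
    (x : ι → R) : (Pᵀ * diagonal w * P).toQuadraticForm' x = weightedSumSquares R w (P *ᵥ x) := by
  rw [toQuadraticForm', LinearMap.BilinMap.toQuadraticMap_apply, toLinearMap₂'_apply',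
    ← mulVec_mulVec, ← mulVec_mulVec, dotProduct_mulVec, vecMul_transpose, weightedSumSquares_apply]
  simp only [dotProduct, mulVec_diagonal, smul_eq_mul]
  exact sum_congr rfl fun j _ => by ring

theorem equivalent_weightedSumSquares_of_eq_transpose_mul_diagonal_mul [CommRing R]
    {A : Matrix ι ι R} {P : Matrix κ ι R} {w : κ → R} (hP : Function.Bijective P.mulVec)
    (hA : A = Pᵀ * diagonal w * P) :
    A.toQuadraticForm'.Equivalent (weightedSumSquares R w) :=
  ⟨{ LinearEquiv.ofBijective P.mulVecLin hP with
      map_app' := fun x => by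
        rw [hA, toQuadraticForm'_transpose_mul_diagonal_mul]; rfl }⟩

theorem sigPos_toQuadraticForm'_eq_card {A : Matrix ι ι ℝ} {P : Matrix κ ι ℝ} {w : κ → ℝ}
    (hP : Function.Bijective P.mulVec) (hA : A = Pᵀ * diagonal w * P) :
    sigPos A.toQuadraticForm' = #{j | 0 < w j} := by
  rw [QuadraticForm.sigPos_of_equiv_weightedSumSquares
    (equivalent_weightedSumSquares_of_eq_transpose_mul_diagonal_mul hP hA),
    Set.ncard_eq_toFinset_card', Set.toFinset_ofPred]

theorem sigNeg_toQuadraticForm'_eq_card {A : Matrix ι ι ℝ} {P : Matrix κ ι ℝ} {w : κ → ℝ}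
    (hP : Function.Bijective P.mulVec) (hA : A = Pᵀ * diagonal w * P) :
    sigNeg A.toQuadraticForm' = #{j | w j < 0} := by
  rw [QuadraticForm.sigNeg_of_equiv_weightedSumSquares
    (equivalent_weightedSumSquares_of_eq_transpose_mul_diagonal_mul hP hA),
    Set.ncard_eq_toFinset_card', Set.toFinset_ofPred]

theorem IsHermitian.eq_transpose_mul_diagonal_eigenvalues_mul {A : Matrix ι ι ℝ}
    (hA : A.IsHermitian) :
    ∃ P : Matrix ι ι ℝ, Function.Bijective P.mulVec ∧ A = Pᵀ * diagonal hA.eigenvalues * P := by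
  refine ⟨star (hA.eigenvectorUnitary : Matrix ι ι ℝ), ?_, ?_⟩
  · have h : IsUnit (star (hA.eigenvectorUnitary : Matrix ι ι ℝ)) :=
      Unitary.isUnit_coe (U := star hA.eigenvectorUnitary)
    exact ⟨mulVec_injective_iff_isUnit.mpr h, mulVec_surjective_iff_isUnit.mpr h⟩
  · conv_lhs => rw [hA.spectral_theorem]
    simp [star_eq_conjTranspose]

theorem IsHermitian.card_pos_eigenvalues_sub_card_neg {A : Matrix ι ι ℝ} (hA : A.IsHermitian)
    {P : Matrix κ ι ℝ} {w : κ → ℝ} (hP : Function.Bijective P.mulVec)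
    (hAw : A = Pᵀ * diagonal w * P) :
    (#{i | 0 < hA.eigenvalues i} : ℤ) - #{i | hA.eigenvalues i < 0} =
      #{j | 0 < w j} - #{j | w j < 0} := by
  obtain ⟨Q, hQ, hAQ⟩ := hA.eq_transpose_mul_diagonal_eigenvalues_mul
  rw [← sigPos_toQuadraticForm'_eq_card hQ hAQ, ← sigNeg_toQuadraticForm'_eq_card hQ hAQ,
    ← sigPos_toQuadraticForm'_eq_card hP hAw, ← sigNeg_toQuadraticForm'_eq_card hP hAw]

end Matrix

namespace Complex

/-- A root `z` with `Im z < 0` contributes the form `x ↦ Im ∑ xᵢ zⁱ` with weight `-2`, which for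
`z = ᾱ` is minus the imaginary part of `ℓ_α`; every other root `z` contributes `x ↦ Re ∑ xᵢ zⁱ`,
with weight `1` if it is real and `2` otherwise. -/
noncomputable def conjPairCoord (z : ℂ) (i : ℕ) : ℝ := if z.im < 0 then (z ^ i).im else (z ^ i).re

noncomputable def conjPairWeight (z : ℂ) : ℝ := if z.im = 0 then 1 else if 0 < z.im then 2 else -2

theorem re_pow_add_add_re_conj_pow_add (z : ℂ) (i j : ℕ) :
    (z ^ (i + j)).re + (conj z ^ (i + j)).re =
      conjPairWeight z * conjPairCoord z i * conjPairCoord z j +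
        conjPairWeight (conj z) * conjPairCoord (conj z) i * conjPairCoord (conj z) j := by
  have hre (k : ℕ) : (conj z ^ k).re = (z ^ k).re := by rw [← map_pow, conj_re]
  have him (k : ℕ) : (conj z ^ k).im = -(z ^ k).im := by rw [← map_pow, conj_im]
  rcases lt_trichotomy z.im 0 with h | h | h
  · simp [conjPairCoord, conjPairWeight, h, h.ne, h.not_gt, hre, him, pow_add, mul_re]
    ring
  · have hz : conj z = z := conj_eq_iff_im.mpr h
    have him0 (k : ℕ) : (z ^ k).im = 0 := conj_eq_iff_im.mp (by rw [map_pow, hz])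
    simp [conjPairCoord, conjPairWeight, hz, h, pow_add, mul_re, him0]
  · simp [conjPairCoord, conjPairWeight, h, h.ne', h.not_gt, hre, him, pow_add, mul_re]
    ring

noncomputable def conjPairMatrix (s : Finset ℂ) (n : ℕ) : Matrix s (Fin n) ℝ :=
  Matrix.of fun z i => conjPairCoord z i

variable {s : Finset ℂ}

theorem eq_transpose_conjPairMatrix_mul_diagonal_mul (hs : ∀ z ∈ s, conj z ∈ s) {n : ℕ}
    {H : Matrix (Fin n) (Fin n) ℝ} (hH : ∀ i j : Fin n, H i j = ∑ z ∈ s, (z ^ (i + j : ℕ)).re) :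
    H = (conjPairMatrix s n)ᵀ * diagonal (fun z : s => conjPairWeight z) * conjPairMatrix s n := by
  ext i j
  rw [hH, Finset.sum_eq_sum_of_add_apply_involution hs (fun z _ => conj_conj z)
    fun z _ => re_pow_add_add_re_conj_pow_add z i j, ← sum_coe_sort s, Matrix.mul_apply]
  simp only [mul_diagonal, transpose_apply, conjPairMatrix, of_apply]
  exact sum_congr rfl fun z _ => by ring

theorem conjPairMatrix_mulVec_injective (hs : ∀ z ∈ s, conj z ∈ s) {n : ℕ} (hcard : #s = n) :
    Function.Injective (conjPairMatrix s n).mulVec := by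
  refine (injective_iff_map_eq_zero (conjPairMatrix s n).mulVecLin).mpr fun x hx => ?_
  set q : ℂ → ℂ := fun z => ∑ i : Fin n, (x i : ℂ) * z ^ (i : ℕ)
  have hq_conj (z : ℂ) : q (conj z) = conj (q z) := by simp [q, map_sum, map_pow]
  have hrow (z : ℂ) (hz : z ∈ s) : (if z.im < 0 then (q z).im else (q z).re) = 0 := by
    have := congrFun hx ⟨z, hz⟩
    simp only [mulVecLin_apply, mulVec, dotProduct, conjPairMatrix, of_apply, conjPairCoord] at this
    split_ifs at this ⊢ <;> simpa [q, re_sum, im_sum, mul_comm] using this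
  have hq (z : ℂ) (hz : z ∈ s) : q z = 0 := by
    have hconj := hrow _ (hs z hz)
    rw [hq_conj, conj_im] at hconj
    apply Complex.ext
    · rcases lt_or_ge z.im 0 with h | h
      · simpa [h.le.not_gt, hq_conj] using hconj
      · simpa [h.not_gt] using hrow z hz
    · rcases lt_trichotomy z.im 0 with h | h | h
      · simpa [h] using hrow z hz
      · exact conj_eq_iff_im.mp (by rw [← hq_conj, conj_eq_iff_im.mpr h])
      · simpa [h] using hconj
  have := Finset.eq_zero_of_forall_mem_sum_mul_pow_eq_zero hcard (v := fun i => (x i : ℂ)) hq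
  funext i
  simpa using congrFun this i

theorem conjPairMatrix_mulVec_bijective (hs : ∀ z ∈ s, conj z ∈ s) {n : ℕ} (hcard : #s = n) :
    Function.Bijective (conjPairMatrix s n).mulVec :=
  have hinj := conjPairMatrix_mulVec_injective hs hcard
  ⟨hinj, (LinearMap.injective_iff_surjective_of_finrank_eq_finrank
    (f := (conjPairMatrix s n).mulVecLin) (by simp [hcard])).mp hinj⟩

theorem card_conjPairWeight_pos_sub_card_neg (hs : ∀ z ∈ s, conj z ∈ s) :
    (#{z : s | 0 < conjPairWeight z} : ℤ) - #{z : s | conjPairWeight z < 0} =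
      #{z ∈ s | z.im = 0} := by
  have hcoe (q : ℂ → Prop) [DecidablePred q] : #{z : s | q z} = #{z ∈ s | q z} := by
    rw [card_filter, card_filter, sum_coe_sort s fun z => if q z then 1 else 0]
  have hpos : #{z ∈ s | 0 < conjPairWeight z} = #{z ∈ s | z.im = 0} + #{z ∈ s | 0 < z.im} := by
    rw [← card_union_of_disjoint (disjoint_filter.mpr fun z _ h h' => h'.ne' h), ← filter_or]
    refine congrArg card (filter_congr fun z _ => ?_)
    rcases lt_trichotomy z.im 0 with h | h | h
    · simp [conjPairWeight, h.ne, h.not_gt]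
    · simp [conjPairWeight, h]
    · simp [conjPairWeight, h.ne', h]
  have hneg : #{z ∈ s | conjPairWeight z < 0} = #{z ∈ s | z.im < 0} := by
    refine congrArg card (filter_congr fun z _ => ?_)
    rcases lt_trichotomy z.im 0 with h | h | h
    · simp [conjPairWeight, h.ne, h.not_gt, h]
    · simp [conjPairWeight, h]
    · simp [conjPairWeight, h.ne', h, h.le.not_gt]
  have hpair : #{z ∈ s | 0 < z.im} = #{z ∈ s | z.im < 0} :=
    card_nbij' conj conj (fun z hz => by simp_all) (fun z hz => by simp_all)
      (fun z _ => conj_conj z) (fun z _ => conj_conj z)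
  rw [hcoe (0 < conjPairWeight ·), hcoe (conjPairWeight · < 0), hpos, hneg, hpair]
  push_cast
  ring

end Complex

namespace Polynomial

theorem conj_mem_roots_map_algebraMap {p : ℝ[X]} {z : ℂ}
    (hz : z ∈ (p.map (algebraMap ℝ ℂ)).roots) : conj z ∈ (p.map (algebraMap ℝ ℂ)).roots := by
  rw [mem_roots', IsRoot, eval_map_algebraMap] at hz ⊢
  exact ⟨hz.1, by rw [← Complex.conjAe_coe, aeval_algHom_apply, hz.2, map_zero]⟩

theorem card_filter_im_eq_zero_roots_map_algebraMap (p : ℝ[X]) :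
    #{z ∈ (p.map (algebraMap ℝ ℂ)).roots.toFinset | z.im = 0} = #p.roots.toFinset := by
  rcases eq_or_ne p 0 with rfl | hp
  · simp
  have hmem (r : ℝ) : (r : ℂ) ∈ (p.map (algebraMap ℝ ℂ)).roots ↔ r ∈ p.roots := by
    rw [mem_roots_map_of_injective (algebraMap ℝ ℂ).injective hp, mem_roots hp, IsRoot,
      ← Complex.coe_algebraMap, eval₂_at_apply, map_eq_zero]
  have hre {z : ℂ} (hz : z.im = 0) : (z.re : ℂ) = z := Complex.ext rfl (by simp [hz])
  symm
  refine card_nbij' (↑) Complex.re (fun r hr => ?_) (fun z hz => ?_) (fun r _ => by simp)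
    (fun z hz => hre (mem_filter.mp hz).2)
  · simp_all
  · simp only [coe_filter, Set.mem_ofPred_eq, Multiset.mem_toFinset] at hz
    simpa [← hmem, hre hz.2] using hz.1

end Polynomial

theorem hermite_matrix_hankel_and_signature_general
    (n : ℕ) (f : Polynomial ℚ) (hdeg : f.natDegree = n)
    (hsep : (f.map (algebraMap ℚ ℂ)).roots.toFinset.card = n)
    (p : ℕ → ℂ) (hp : ∀ k, p k = ((f.map (algebraMap ℚ ℂ)).roots.map (· ^ k)).sum)
    (Hr : Matrix (Fin n) (Fin n) ℝ)
    (hHr : ∀ i j : Fin n, (Hr i j : ℂ) = p (i.1 + j.1))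
    (hherm : Hr.IsHermitian) :
    (∀ i j : Fin n,
      (algebraMap ℚ ℂ) (LinearMap.trace ℚ (Polynomial ℚ ⧸ Ideal.span {f})
        (LinearMap.mulLeft ℚ (Ideal.Quotient.mk (Ideal.span {f}) (X ^ (i.1 + j.1)))))
        = p (i.1 + j.1)) ∧
    ((Finset.univ.filter (fun i => 0 < hherm.eigenvalues i)).card : ℤ) -
        ((Finset.univ.filter (fun i => hherm.eigenvalues i < 0)).card : ℤ) =
      ((f.map (algebraMap ℚ ℝ)).roots.toFinset.card : ℤ) := by
  subst hdeg
  set s := (f.map (algebraMap ℚ ℂ)).roots.toFinset with hs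
  have hnodup : (f.map (algebraMap ℚ ℂ)).roots.Nodup :=
    nodup_roots_of_card_toFinset_eq_natDegree (by rwa [natDegree_map])
  have hps (k : ℕ) : p k = ∑ z ∈ s, z ^ k := by
    rw [hp, sum_eq_multiset_sum, Multiset.toFinset_val, hnodup.dedup]
  refine ⟨fun i j => ?_, ?_⟩
  · rw [hps]
    exact (AdjoinRoot.algebraMap_trace_mk_eq_sum_roots (ne_zero_of_natDegree_gt i.pos) hsep _).trans
      (by simp [s])
  · have hfR : f.map (algebraMap ℚ ℂ) = (f.map (algebraMap ℚ ℝ)).map (algebraMap ℝ ℂ) := by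
      rw [Polynomial.map_map, ← IsScalarTower.algebraMap_eq]
    have hconj (z : ℂ) (hz : z ∈ s) : conj z ∈ s := by
      rw [hs, hfR, Multiset.mem_toFinset] at hz ⊢
      exact conj_mem_roots_map_algebraMap hz
    have hH := Complex.eq_transpose_conjPairMatrix_mul_diagonal_mul hconj (H := Hr) fun i j => by
      rw [← Complex.ofReal_re (Hr i j), hHr, hps, Complex.re_sum]
    rw [hherm.card_pos_eigenvalues_sub_card_neg
        (Complex.conjPairMatrix_mulVec_bijective hconj hsep) hH,
      Complex.card_conjPairWeight_pos_sub_card_neg hconj, hs, hfR,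
      card_filter_im_eq_zero_roots_map_algebraMap]

/-- For a monic univariate `f ∈ ℚ[x]` of degree `n` with `n` distinct complex
roots, the Hermite matrix of `ℚ[x]/(f)` in the basis `1, x, …, x^{n-1}` is the
Hankel matrix of power sums `p_{i+j}` of the roots of `f`, and the signature of
that (real symmetric) Hankel matrix equals the number of distinct real roots of
`f`. -/
theorem hermite_matrix_hankel_and_signature
    (n : ℕ) (f : Polynomial ℚ) (hmonic : f.Monic) (hdeg : f.natDegree = n)
    (hsep : (f.map (algebraMap ℚ ℂ)).roots.toFinset.card = n)
    (p : ℕ → ℂ) (hp : ∀ k, p k = ((f.map (algebraMap ℚ ℂ)).roots.map (· ^ k)).sum)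
    (hFD : FiniteDimensional ℚ (Polynomial ℚ ⧸ Ideal.span {f}))
    (Hr : Matrix (Fin n) (Fin n) ℝ)
    (hHr : ∀ i j : Fin n, (Hr i j : ℂ) = p (i.1 + j.1))
    (hherm : Hr.IsHermitian) :
    (∀ i j : Fin n,
      (algebraMap ℚ ℂ) (LinearMap.trace ℚ (Polynomial ℚ ⧸ Ideal.span {f})
        (LinearMap.mulLeft ℚ (Ideal.Quotient.mk (Ideal.span {f}) (X ^ (i.1 + j.1)))))
        = p (i.1 + j.1)) ∧
    ((Finset.univ.filter (fun i => 0 < hherm.eigenvalues i)).card : ℤ) -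
        ((Finset.univ.filter (fun i => hherm.eigenvalues i < 0)).card : ℤ) =
      ((f.map (algebraMap ℚ ℝ)).roots.toFinset.card : ℤ) :=
  hermite_matrix_hankel_and_signature_general n f hdeg hsep p hp Hr hHr hherm
end

section
/- The plane quartic X = V(x⁴ + y⁴ − z⁴) has no simple totally real line section: no real projective line meets X in four distinct real points. -/
lemma quart_le {x y t : ℝ} (ht0 : 0 ≤ t) (ht1 : t ≤ 1) :
    ((1-t)*x + t*y)^4 ≤ (1-t)*x^4 + t*y^4 := by
  have h := (Even.convexOn_pow (𝕜 := ℝ) (n := 4) (by decide)).2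
    (Set.mem_univ x) (Set.mem_univ y) (by linarith : (0:ℝ) ≤ 1 - t) ht0 (by ring)
  simpa [smul_eq_mul] using h

lemma quart_lt {x y t : ℝ} (ht0 : 0 < t) (ht1 : t < 1) (hxy : x ≠ y) :
    ((1-t)*x + t*y)^4 < (1-t)*x^4 + t*y^4 := by
  have h := (Even.strictConvexOn_pow (by decide : Even 4) (by decide)).2
    (Set.mem_univ x) (Set.mem_univ y) hxy (by linarith : (0:ℝ) < 1 - t) ht0 (by ring)
  simpa [smul_eq_mul] using h

lemma core (a b u0 v0 si sj sk : ℝ) (hab : a ≠ 0 ∨ b ≠ 0)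
    (hij : si < sj) (hjk : sj < sk)
    (hi : (u0 + si*b)^4 + (v0 - si*a)^4 = 1)
    (hj : (u0 + sj*b)^4 + (v0 - sj*a)^4 = 1)
    (hk : (u0 + sk*b)^4 + (v0 - sk*a)^4 = 1) : False := by
  have hik : si < sk := hij.trans hjk
  have hne : sk - si ≠ 0 := ne_of_gt (by linarith)
  set t := (sj - si)/(sk - si) with hts
  have ht0 : 0 < t := div_pos (by linarith) (by linarith)
  have ht1 : t < 1 := (div_lt_one (by linarith)).2 (by linarith)
  have hu : u0 + sj*b = (1-t)*(u0 + si*b) + t*(u0 + sk*b) := by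
    rw [hts]; field_simp; ring
  have hv : v0 - sj*a = (1-t)*(v0 - si*a) + t*(v0 - sk*a) := by
    rw [hts]; field_simp; ring
  have e1 : (1-t)*(u0 + si*b)^4 + (1-t)*(v0 - si*a)^4 = 1-t := by
    linear_combination (1-t)*hi
  have e2 : t*(u0 + sk*b)^4 + t*(v0 - sk*a)^4 = t := by
    linear_combination t*hk
  rcases hab with ha | hb
  · have hxy : v0 - si*a ≠ v0 - sk*a := by
      intro h
      apply ha
      have : (si - sk) * a = 0 := by linarith
      rcases mul_eq_zero.1 this with h' | h'
      · exact absurd h' (by intro h''; linarith)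
      · exact h'
    have l1 := quart_lt ht0 ht1 hxy
    have l2 := quart_le ht0.le ht1.le (x := u0 + si*b) (y := u0 + sk*b)
    rw [← hv] at l1
    rw [← hu] at l2
    linarith
  · have hxy : u0 + si*b ≠ u0 + sk*b := by
      intro h
      apply hb
      have : (si - sk) * b = 0 := by linarith
      rcases mul_eq_zero.1 this with h' | h'
      · exact absurd h' (by intro h''; linarith)
      · exact h'
    have l1 := quart_lt ht0 ht1 hxy
    have l2 := quart_le ht0.le ht1.le (x := v0 - si*a) (y := v0 - sk*a)
    rw [← hu] at l1
    rw [← hv] at l2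
    linarith

/-- The plane quartic `X = V(x⁴ + y⁴ − z⁴)` has no simple totally real line
section: no real projective line (given by a nonzero linear form
`a·x + b·y + c·z`) meets `X` in four distinct real projective points.
Projective points are represented by nonzero vectors in `ℝ³`, with distinctness
meaning pairwise non-proportionality. -/
theorem fermat_quartic_no_simple_totally_real_line_section :
    ¬ ∃ (a b c : ℝ), (a, b, c) ≠ (0, 0, 0) ∧
      ∃ p : Fin 4 → (Fin 3 → ℝ),
        (∀ i, p i ≠ 0 ∧
          (p i 0) ^ 4 + (p i 1) ^ 4 - (p i 2) ^ 4 = 0 ∧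
          a * p i 0 + b * p i 1 + c * p i 2 = 0) ∧
        (∀ i j, i ≠ j → ∀ t : ℝ, p i ≠ t • p j) := by
  rintro ⟨a, b, c, habc, p, hp, hdist⟩
  -- every point has nonzero z-coordinate
  have hz : ∀ i, p i 2 ≠ 0 := by
    intro i h
    obtain ⟨hne, heq, -⟩ := hp i
    have h2 : (p i 2)^4 = 0 := by rw [h]; ring
    have h0 : (0:ℝ) ≤ (p i 0)^4 := by positivity
    have h1 : (0:ℝ) ≤ (p i 1)^4 := by positivity
    have hx4 : (p i 0)^4 = 0 := by linarith
    have hy4 : (p i 1)^4 = 0 := by linarith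
    have hx : p i 0 = 0 := by
      have := pow_eq_zero_iff (n := 4) (by norm_num) |>.1 hx4
      exact this
    have hy : p i 1 = 0 := by
      have := pow_eq_zero_iff (n := 4) (by norm_num) |>.1 hy4
      exact this
    apply hne
    funext j
    fin_cases j
    · exact hx
    · exact hy
    · exact h
  have hab : a ≠ 0 ∨ b ≠ 0 := by
    by_contra hcon
    push_neg at hcon
    obtain ⟨ha, hb⟩ := hcon
    have hc : c ≠ 0 := by
      intro hc
      exact habc (by rw [ha, hb, hc])
    obtain ⟨-, -, hline⟩ := hp 0
    rw [ha, hb] at hline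
    simp only [zero_mul, zero_add] at hline
    rcases mul_eq_zero.1 hline with h | h
    · exact hc h
    · exact hz 0 h
  set u : Fin 4 → ℝ := fun i => p i 0 / p i 2 with hu_def
  set v : Fin 4 → ℝ := fun i => p i 1 / p i 2 with hv_def
  have hsphere : ∀ i, (u i)^4 + (v i)^4 = 1 := by
    intro i
    obtain ⟨-, heq, -⟩ := hp i
    rw [hu_def, hv_def]
    field_simp [hz i]
    linarith
  have hline' : ∀ i, a * u i + b * v i + c = 0 := by
    intro i
    obtain ⟨-, -, hl⟩ := hp i
    rw [hu_def, hv_def]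
    field_simp [hz i]
    linear_combination hl
  have hab2 : a^2 + b^2 ≠ 0 := by
    rcases hab with h | h <;> positivity
  set s : Fin 4 → ℝ := fun i => (b*(u i - u 0) - a*(v i - v 0))/(a^2+b^2) with hs_def
  have key : ∀ i, a*(u i - u 0) + b*(v i - v 0) = 0 := fun i => by
    linear_combination hline' i - hline' 0
  have hu' : ∀ i, u i = u 0 + s i * b := by
    intro i
    rw [hs_def]
    field_simp
    linear_combination a * key i
  have hv' : ∀ i, v i = v 0 - s i * a := by
    intro i
    rw [hs_def]
    field_simp
    linear_combination b * key i
  have hsne : ∀ i j : Fin 4, i ≠ j → s i ≠ s j := by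
    intro i j hij hs
    have huu : u i = u j := by rw [hu' i, hu' j, hs]
    have hvv : v i = v j := by rw [hv' i, hv' j, hs]
    apply hdist i j hij (p i 2 / p j 2)
    funext k
    have hzj := hz j
    have hzi := hz i
    fin_cases k
    · show p i 0 = p i 2 / p j 2 * p j 0
      have : p i 0 / p i 2 = p j 0 / p j 2 := huu
      field_simp at this ⊢
      linear_combination this
    · show p i 1 = p i 2 / p j 2 * p j 1
      have : p i 1 / p i 2 = p j 1 / p j 2 := hvv
      field_simp at this ⊢
      linear_combination this
    · show p i 2 = p i 2 / p j 2 * p j 2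
      field_simp
  have H : ∀ i, (u 0 + s i * b)^4 + (v 0 - s i * a)^4 = 1 := by
    intro i
    rw [← hu' i, ← hv' i]
    exact hsphere i
  have h01 : s 0 ≠ s 1 := hsne 0 1 (by decide)
  have h02 : s 0 ≠ s 2 := hsne 0 2 (by decide)
  have h12 : s 1 ≠ s 2 := hsne 1 2 (by decide)
  rcases lt_trichotomy (s 0) (s 1) with h1 | h1 | h1
  · rcases lt_trichotomy (s 1) (s 2) with h2 | h2 | h2
    · exact core a b (u 0) (v 0) (s 0) (s 1) (s 2) hab h1 h2 (H 0) (H 1) (H 2)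
    · exact h12 h2
    · rcases lt_trichotomy (s 0) (s 2) with h3 | h3 | h3
      · exact core a b (u 0) (v 0) (s 0) (s 2) (s 1) hab h3 h2 (H 0) (H 2) (H 1)
      · exact h02 h3
      · exact core a b (u 0) (v 0) (s 2) (s 0) (s 1) hab h3 h1 (H 2) (H 0) (H 1)
  · exact h01 h1
  · rcases lt_trichotomy (s 0) (s 2) with h2 | h2 | h2
    · exact core a b (u 0) (v 0) (s 1) (s 0) (s 2) hab h1 h2 (H 1) (H 0) (H 2)
    · exact h02 h2
    · rcases lt_trichotomy (s 1) (s 2) with h3 | h3 | h3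
      · exact core a b (u 0) (v 0) (s 1) (s 2) (s 0) hab h3 h2 (H 1) (H 2) (H 0)
      · exact h12 h3
      · exact core a b (u 0) (v 0) (s 2) (s 1) (s 0) hab h3 h1 (H 2) (H 1) (H 0)
end

section
/- For a, b, c, d, e, g ∈ ℝ, the equation (at+b)⁴ + (ct+d)⁴ = (et+g)⁴ has at most 3 distinct real solutions t unless it holds identically. -/
private lemma conv4_aux (L M x y : ℝ) (hM1 : M = 1 - L) :
    L*x^4 + M*y^4 - (L*x+M*y)^4
      = L*M*(x-y)^2*((x+y)^2 + (L*x+M*y)^2 + L*x^2 + M*y^2) := by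
  rw [hM1]; ring

private lemma conv4 (L M x y : ℝ) (hL : 0 ≤ L) (hM : 0 ≤ M) (hs : L + M = 1) :
    (L*x+M*y)^4 ≤ L*x^4 + M*y^4 := by
  have h := conv4_aux L M x y (by linarith)
  nlinarith [mul_nonneg (mul_nonneg (mul_nonneg hL hM) (sq_nonneg (x-y)))
      (by nlinarith [sq_nonneg (x+y), sq_nonneg (L*x+M*y),
        mul_nonneg hL (sq_nonneg x), mul_nonneg hM (sq_nonneg y)] :
        (0:ℝ) ≤ (x+y)^2 + (L*x+M*y)^2 + L*x^2 + M*y^2)]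

private lemma conv4' (L M x y : ℝ) (hL : 0 < L) (hM : 0 < M) (hs : L + M = 1)
    (hxy : x ≠ y) : (L*x+M*y)^4 < L*x^4 + M*y^4 := by
  have h := conv4_aux L M x y (by linarith)
  have hxy' : x - y ≠ 0 := sub_ne_zero.mpr hxy
  have hsq : 0 < (x - y)^2 := by positivity
  have hE : 0 < (x+y)^2 + (L*x+M*y)^2 + L*x^2 + M*y^2 := by
    rcases eq_or_ne x 0 with hx0 | hx0
    · have hy0 : y ≠ 0 := by rintro rfl; exact hxy (hx0.trans rfl)
      nlinarith [sq_nonneg (x+y), sq_nonneg (L*x+M*y),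
        mul_nonneg hL.le (sq_nonneg x), mul_pos hM (by positivity : (0:ℝ) < y^2)]
    · nlinarith [sq_nonneg (x+y), sq_nonneg (L*x+M*y),
        mul_pos hL (by positivity : (0:ℝ) < x^2), mul_nonneg hM.le (sq_nonneg y)]
  nlinarith [mul_pos (mul_pos (mul_pos hL hM) hsq) hE]

private lemma sorted3 (α β γ x1 y1 x2 y2 x3 y3 : ℝ) (hβ : β ≠ 0)
    (l1 : α*x1 + β*y1 + γ = 0) (l2 : α*x2 + β*y2 + γ = 0) (l3 : α*x3 + β*y3 + γ = 0)
    (c1 : x1^4 + y1^4 = 1) (c2 : x2^4 + y2^4 = 1) (c3 : x3^4 + y3^4 = 1)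
    (h12 : x1 < x2) (h23 : x2 < x3) : False := by
  have h13 : x1 < x3 := h12.trans h23
  have hden : 0 < x3 - x1 := by linarith
  set L : ℝ := (x3 - x2)/(x3 - x1) with hLdef
  set M : ℝ := (x2 - x1)/(x3 - x1) with hMdef
  have hL : 0 < L := div_pos (by linarith) hden
  have hM : 0 < M := div_pos (by linarith) hden
  have hs : L + M = 1 := by
    rw [hLdef, hMdef]; field_simp; ring
  have hx : x2 = L*x1 + M*x3 := by
    rw [hLdef, hMdef]; field_simp; ring
  have hy : y2 = L*y1 + M*y3 := by
    have h0 : β * (y2 - (L*y1 + M*y3)) = 0 := by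
      linear_combination l2 - L*l1 - M*l3 - α*hx + γ*hs
    have := mul_eq_zero.mp h0
    rcases this with h | h
    · exact absurd h hβ
    · linarith
  have A : (L*x1+M*x3)^4 < L*x1^4 + M*x3^4 := conv4' L M x1 x3 hL hM hs h13.ne
  have B : (L*y1+M*y3)^4 ≤ L*y1^4 + M*y3^4 := conv4 L M y1 y3 hL.le hM.le hs
  rw [hx, hy] at c2
  have e1 : L*x1^4 + L*y1^4 = L := by linear_combination L*c1
  have e3 : M*x3^4 + M*y3^4 = M := by linear_combination M*c3
  linarith

private lemma three_points (α β γ x1 y1 x2 y2 x3 y3 : ℝ) (hβ : β ≠ 0)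
    (l1 : α*x1 + β*y1 + γ = 0) (l2 : α*x2 + β*y2 + γ = 0) (l3 : α*x3 + β*y3 + γ = 0)
    (c1 : x1^4 + y1^4 = 1) (c2 : x2^4 + y2^4 = 1) (c3 : x3^4 + y3^4 = 1)
    (h12 : x1 ≠ x2) (h13 : x1 ≠ x3) (h23 : x2 ≠ x3) : False := by
  rcases h12.lt_or_gt with h12 | h12 <;>
  rcases h13.lt_or_gt with h13 | h13 <;>
  rcases h23.lt_or_gt with h23 | h23
  · exact sorted3 α β γ x1 y1 x2 y2 x3 y3 hβ l1 l2 l3 c1 c2 c3 h12 h23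
  · exact sorted3 α β γ x1 y1 x3 y3 x2 y2 hβ l1 l3 l2 c1 c3 c2 h13 h23
  · linarith
  · exact sorted3 α β γ x3 y3 x1 y1 x2 y2 hβ l3 l1 l2 c3 c1 c2 h13 h12
  · exact sorted3 α β γ x2 y2 x1 y1 x3 y3 hβ l2 l1 l3 c2 c1 c3 h12 h13
  · linarith
  · exact sorted3 α β γ x2 y2 x3 y3 x1 y1 hβ l2 l3 l1 c2 c3 c1 h23 h13
  · exact sorted3 α β γ x3 y3 x2 y2 x1 y1 hβ l3 l2 l1 c3 c2 c1 h23 h12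

/-- The equation `(at+b)⁴ + (ct+d)⁴ = (et+g)⁴` has at most 3 distinct real
solutions `t` unless it holds identically: if it holds for four distinct real
values of `t`, then it holds for all real `t`. -/
theorem fermat_parametrized_line_four_roots_implies_identity
    (a b c d e g : ℝ)
    (h : ∃ t : Fin 4 → ℝ, Function.Injective t ∧
      ∀ i, (a * t i + b) ^ 4 + (c * t i + d) ^ 4 = (e * t i + g) ^ 4) :
    ∀ t : ℝ, (a * t + b) ^ 4 + (c * t + d) ^ 4 = (e * t + g) ^ 4 := by
  obtain ⟨t, hinj, heq⟩ := h
  have hne : ∀ i j : Fin 4, i ≠ j → t i ≠ t j := by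
    intro i j hij hteq
    exact hij (hinj hteq)
  by_cases hw : ∃ i, e * t i + g = 0
  · -- Case A : the third form vanishes at some root
    obtain ⟨i, hwi⟩ := hw
    have hcurve := heq i
    rw [hwi] at hcurve
    have hu4 : (a * t i + b)^4 = 0 := by
      nlinarith [sq_nonneg ((a * t i + b)^2), sq_nonneg ((c * t i + d)^2)]
    have hv4 : (c * t i + d)^4 = 0 := by
      nlinarith [sq_nonneg ((a * t i + b)^2), sq_nonneg ((c * t i + d)^2)]
    have hu : a * t i + b = 0 := by
      exact pow_eq_zero_iff (by norm_num) |>.mp hu4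
    have hv : c * t i + d = 0 := by
      exact pow_eq_zero_iff (by norm_num) |>.mp hv4
    -- choose another index
    set j : Fin 4 := if i = 0 then 1 else 0 with hj
    have hij : i ≠ j := by
      rw [hj]; split <;> simp_all
    have hk0 : (a^4 + c^4 - e^4) * (t j - t i)^4 = 0 := by
      have := heq j
      linear_combination this
        - ((a*t j + b)^3 + (a*t j + b)^2*(a*(t j - t i)) + (a*t j + b)*(a*(t j - t i))^2 + (a*(t j - t i))^3) * hu
        - ((c*t j + d)^3 + (c*t j + d)^2*(c*(t j - t i)) + (c*t j + d)*(c*(t j - t i))^2 + (c*(t j - t i))^3) * hv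
        + ((e*t j + g)^3 + (e*t j + g)^2*(e*(t j - t i)) + (e*t j + g)*(e*(t j - t i))^2 + (e*(t j - t i))^3) * hwi
    have htji : t j - t i ≠ 0 := sub_ne_zero.mpr (hne j i (Ne.symm hij))
    have hk : a^4 + c^4 - e^4 = 0 := by
      rcases mul_eq_zero.mp hk0 with h0 | h0
      · exact h0
      · exact absurd h0 (pow_ne_zero 4 htji)
    intro τ
    linear_combination (τ - t i)^4 * hk
      + ((a*τ + b)^3 + (a*τ + b)^2*(a*(τ - t i)) + (a*τ + b)*(a*(τ - t i))^2 + (a*(τ - t i))^3) * hu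
      + ((c*τ + d)^3 + (c*τ + d)^2*(c*(τ - t i)) + (c*τ + d)*(c*(τ - t i))^2 + (c*(τ - t i))^3) * hv
      - ((e*τ + g)^3 + (e*τ + g)^2*(e*(τ - t i)) + (e*τ + g)*(e*(τ - t i))^2 + (e*(τ - t i))^3) * hwi
  · -- Case B : w(t i) ≠ 0 for all i
    push_neg at hw
    by_cases hd1 : a * g = b * e
    · by_cases hd2 : c * g = d * e
      · -- B1 : the line is (projectively) constant
        intro τ
        have hw0 := hw 0
        have hu' : (a*τ + b) * (e * t 0 + g) = (a * t 0 + b) * (e*τ + g) := by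
          linear_combination (τ - t 0) * hd1
        have hv' : (c*τ + d) * (e * t 0 + g) = (c * t 0 + d) * (e*τ + g) := by
          linear_combination (τ - t 0) * hd2
        have hu4 : ((a*τ + b) * (e * t 0 + g))^4 = ((a * t 0 + b) * (e*τ + g))^4 := by
          rw [hu']
        have hv4 : ((c*τ + d) * (e * t 0 + g))^4 = ((c * t 0 + d) * (e*τ + g))^4 := by
          rw [hv']
        have hc0 := heq 0
        have main : ((a*τ+b)^4 + (c*τ+d)^4) * (e * t 0 + g)^4
            = (e*τ+g)^4 * (e * t 0 + g)^4 := by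
          linear_combination hu4 + hv4 + (e*τ+g)^4 * hc0
        have := mul_right_cancel₀ (pow_ne_zero 4 hw0) main
        linarith
      · -- B2' : use y-coordinates (cg ≠ de)
        exfalso
        have hα : c * g - e * d ≠ 0 := by
          intro h0; exact hd2 (by linarith)
        set x : Fin 4 → ℝ := fun i => (a * t i + b)/(e * t i + g) with hx
        set y : Fin 4 → ℝ := fun i => (c * t i + d)/(e * t i + g) with hy
        have curve : ∀ i, (x i)^4 + (y i)^4 = 1 := by
          intro i
          have hwi := hw i
          rw [hx, hy, div_pow, div_pow, ← add_div,
            div_eq_one_iff_eq (pow_ne_zero 4 hwi)]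
          exact heq i
        have line : ∀ i, (e*b - a*g) * (y i) + (c*g - e*d) * (x i) + (a*d - c*b) = 0 := by
          intro i
          have hwi := hw i
          rw [hx, hy]
          field_simp
          ring
        have ydist : ∀ i j : Fin 4, i ≠ j → y i ≠ y j := by
          intro i j hij hyy
          rw [hy] at hyy
          have := (div_eq_div_iff (hw i) (hw j)).mp hyy
          have h0 : (c*g - d*e) * (t i - t j) = 0 := by linear_combination this
          rcases mul_eq_zero.mp h0 with h0 | h0
          · exact hα (by linarith)
          · exact hne i j hij (by linarith)
        exact three_points (e*b - a*g) (c*g - e*d) (a*d - c*b)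
          (y 0) (x 0) (y 1) (x 1) (y 2) (x 2) hα
          (line 0) (line 1) (line 2)
          (by linear_combination curve 0) (by linear_combination curve 1)
          (by linear_combination curve 2)
          (ydist 0 1 (by decide)) (ydist 0 2 (by decide)) (ydist 1 2 (by decide))
    · -- B2 : use x-coordinates (ag ≠ be)
      exfalso
      have hβ : e * b - a * g ≠ 0 := by
        intro h0; exact hd1 (by linarith)
      set x : Fin 4 → ℝ := fun i => (a * t i + b)/(e * t i + g) with hx
      set y : Fin 4 → ℝ := fun i => (c * t i + d)/(e * t i + g) with hy
      have curve : ∀ i, (x i)^4 + (y i)^4 = 1 := by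
        intro i
        have hwi := hw i
        rw [hx, hy, div_pow, div_pow, ← add_div,
          div_eq_one_iff_eq (pow_ne_zero 4 hwi)]
        exact heq i
      have line : ∀ i, (c*g - e*d) * (x i) + (e*b - a*g) * (y i) + (a*d - c*b) = 0 := by
        intro i
        have hwi := hw i
        rw [hx, hy]
        field_simp
        ring
      have xdist : ∀ i j : Fin 4, i ≠ j → x i ≠ x j := by
        intro i j hij hxx
        rw [hx] at hxx
        have := (div_eq_div_iff (hw i) (hw j)).mp hxx
        have h0 : (a*g - b*e) * (t i - t j) = 0 := by linear_combination this
        rcases mul_eq_zero.mp h0 with h0 | h0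
        · exact hβ (by linarith)
        · exact hne i j hij (by linarith)
      exact three_points (c*g - e*d) (e*b - a*g) (a*d - c*b)
        (x 0) (y 0) (x 1) (y 1) (x 2) (y 2) hβ
        (line 0) (line 1) (line 2)
        (curve 0) (curve 1) (curve 2)
        (xdist 0 1 (by decide)) (xdist 0 2 (by decide)) (xdist 1 2 (by decide))
end
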